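/- arXiv:1706.00607 — 4 statements merged into one kernel-verified Lean document; each statement's English description precedes it below -/
import Mathlib

section
/- Let u : ℝ² → ℝ² be a smooth (C^∞) compactly supported vector field with div u = 0 everywhere on ℝ². Then ∫_{ℝ²} ⟨((u·∇)u)(x), Δu(x)⟩ dx = 0, where ⟨·,·⟩ is the Euclidean inner product on ℝ². (This is the orthogonality relation ((u,∇)u, Δu) = 0 for divergence-free fields, in the boundaryless whole-plane setting.) -/
/-! STATEMENT 3: the orthogonality relation ((u·∇)u, Δu) = 0 for smooth, compactly
supported, divergence-free vector fields on ℝ². -/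

open MeasureTheory

/-- first partial derivative of a scalar function on ℝ². -/
noncomputable def pd1 (f : ℝ × ℝ → ℝ) (x : ℝ × ℝ) : ℝ := fderiv ℝ f x (1, 0)

/-- second partial derivative of a scalar function on ℝ². -/
noncomputable def pd2 (f : ℝ × ℝ → ℝ) (x : ℝ × ℝ) : ℝ := fderiv ℝ f x (0, 1)

/-- the convective term ((u·∇)v)ʲ = u¹∂₁vʲ + u²∂₂vʲ. -/
noncomputable def convect (u v : ℝ × ℝ → ℝ × ℝ) (x : ℝ × ℝ) : ℝ × ℝ :=
  ((u x).1 * pd1 (fun y => (v y).1) x + (u x).2 * pd2 (fun y => (v y).1) x,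
   (u x).1 * pd1 (fun y => (v y).2) x + (u x).2 * pd2 (fun y => (v y).2) x)

/-- divergence of a vector field: div v = ∂₁v¹ + ∂₂v². -/
noncomputable def divg (u : ℝ × ℝ → ℝ × ℝ) (x : ℝ × ℝ) : ℝ :=
  pd1 (fun y => (u y).1) x + pd2 (fun y => (u y).2) x

/-- componentwise Laplacian: (Δu)ʲ = ∂₁₁uʲ + ∂₂₂uʲ. -/
noncomputable def lap (u : ℝ × ℝ → ℝ × ℝ) (x : ℝ × ℝ) : ℝ × ℝ :=
  (pd1 (pd1 fun y => (u y).1) x + pd2 (pd2 fun y => (u y).1) x,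
   pd1 (pd1 fun y => (u y).2) x + pd2 (pd2 fun y => (u y).2) x)

/-- the Euclidean inner product on ℝ². -/
def dot (a b : ℝ × ℝ) : ℝ := a.1 * b.1 + a.2 * b.2

section helpers
variable {f g : ℝ × ℝ → ℝ} {x : ℝ × ℝ}

lemma pd1_add (hf : DifferentiableAt ℝ f x) (hg : DifferentiableAt ℝ g x) :
    pd1 (fun y => f y + g y) x = pd1 f x + pd1 g x := by
  simp [pd1, fderiv_fun_add hf hg]

lemma pd1_mul (hf : DifferentiableAt ℝ f x) (hg : DifferentiableAt ℝ g x) :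
    pd1 (fun y => f y * g y) x = f x * pd1 g x + g x * pd1 f x := by
  simp [pd1, fderiv_fun_mul hf hg]

lemma pd1_sub (hf : DifferentiableAt ℝ f x) (hg : DifferentiableAt ℝ g x) :
    pd1 (fun y => f y - g y) x = pd1 f x - pd1 g x := by
  simp [pd1, fderiv_fun_sub hf hg]

lemma pd1_const_mul (hf : DifferentiableAt ℝ f x) (c : ℝ) :
    pd1 (fun y => c * f y) x = c * pd1 f x := by
  simp [pd1, fderiv_const_mul hf c]

lemma pd1_neg : pd1 (fun y => -f y) x = -pd1 f x := by
  simp [pd1, fderiv_neg]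

lemma contDiff_pd1 (hf : ContDiff ℝ (⊤ : ℕ∞) f) : ContDiff ℝ (⊤ : ℕ∞) (pd1 f) :=
  (hf.fderiv_right (by simp)).clm_apply contDiff_const

lemma hcs_pd1 (hf : HasCompactSupport f) : HasCompactSupport (pd1 f) :=
  (hf.fderiv ℝ).comp_left (g := fun L : (ℝ × ℝ) →L[ℝ] ℝ => L (1,0)) rfl

lemma pd2_add (hf : DifferentiableAt ℝ f x) (hg : DifferentiableAt ℝ g x) :
    pd2 (fun y => f y + g y) x = pd2 f x + pd2 g x := by
  simp [pd2, fderiv_fun_add hf hg]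

lemma pd2_mul (hf : DifferentiableAt ℝ f x) (hg : DifferentiableAt ℝ g x) :
    pd2 (fun y => f y * g y) x = f x * pd2 g x + g x * pd2 f x := by
  simp [pd2, fderiv_fun_mul hf hg]

lemma pd2_sub (hf : DifferentiableAt ℝ f x) (hg : DifferentiableAt ℝ g x) :
    pd2 (fun y => f y - g y) x = pd2 f x - pd2 g x := by
  simp [pd2, fderiv_fun_sub hf hg]

lemma pd2_const_mul (hf : DifferentiableAt ℝ f x) (c : ℝ) :
    pd2 (fun y => c * f y) x = c * pd2 f x := by
  simp [pd2, fderiv_const_mul hf c]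

lemma pd2_neg : pd2 (fun y => -f y) x = -pd2 f x := by
  simp [pd2, fderiv_neg]

lemma contDiff_pd2 (hf : ContDiff ℝ (⊤ : ℕ∞) f) : ContDiff ℝ (⊤ : ℕ∞) (pd2 f) :=
  (hf.fderiv_right (by simp)).clm_apply contDiff_const

lemma hcs_pd2 (hf : HasCompactSupport f) : HasCompactSupport (pd2 f) :=
  (hf.fderiv ℝ).comp_left (g := fun L : (ℝ × ℝ) →L[ℝ] ℝ => L (0,1)) rfl

lemma pd1_pd2_comm (hf : ContDiff ℝ (⊤ : ℕ∞) f) (x : ℝ × ℝ) :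
    pd1 (pd2 f) x = pd2 (pd1 f) x := by
  have hsym : IsSymmSndFDerivAt ℝ f x :=
    (hf.contDiffAt).isSymmSndFDerivAt (by simpa using WithTop.coe_le_coe.mpr (le_top : (2:ℕ∞) ≤ ⊤))
  have hd : DifferentiableAt ℝ (fderiv ℝ f) x :=
    ((hf.fderiv_right (m := 1) ((by rw [one_add_one_eq_two]; exact WithTop.coe_le_coe.mpr le_top))).differentiable one_ne_zero).differentiableAt
  have h1 : pd1 (pd2 f) x = fderiv ℝ (fderiv ℝ f) x (1,0) (0,1) := by
    have : pd2 f = fun y => fderiv ℝ f y (0,1) := rfl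
    rw [this]; simp only [pd1]
    rw [fderiv_clm_apply hd (differentiableAt_const _)]
    simp
  have h2 : pd2 (pd1 f) x = fderiv ℝ (fderiv ℝ f) x (0,1) (1,0) := by
    have : pd1 f = fun y => fderiv ℝ f y (1,0) := rfl
    rw [this]; simp only [pd2]
    rw [fderiv_clm_apply hd (differentiableAt_const _)]
    simp
  rw [h1, h2, hsym.eq]

lemma integral_pd1_eq_zero (hf : ContDiff ℝ (⊤ : ℕ∞) f) (hsupp : HasCompactSupport f) :
    ∫ x : ℝ × ℝ, pd1 f x = 0 := by
  have h := integral_mul_fderiv_eq_neg_fderiv_mul_of_integrable (μ := volume)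
    (f := f) (g := fun _ => (1:ℝ)) (v := ((1:ℝ),(0:ℝ)))
    ?_ ?_ ?_ (fun y _ => (hf.differentiable (by simp)).differentiableAt) (fun y _ => differentiableAt_const _)
  · simp only [fderiv_fun_const, Pi.zero_apply, ContinuousLinearMap.zero_apply, mul_zero,
      mul_one, integral_zero] at h
    have : ∫ x : ℝ × ℝ, fderiv ℝ f x ((1:ℝ),(0:ℝ)) = 0 := by linarith [h]
    simpa [pd1] using this
  · simp only [mul_one]
    exact ((contDiff_pd1 hf).continuous).integrable_of_hasCompactSupport (hcs_pd1 hsupp)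
  · simp [fderiv_fun_const]
  · simp only [mul_one]
    exact (hf.continuous).integrable_of_hasCompactSupport hsupp

lemma integral_pd2_eq_zero (hf : ContDiff ℝ (⊤ : ℕ∞) f) (hsupp : HasCompactSupport f) :
    ∫ x : ℝ × ℝ, pd2 f x = 0 := by
  have h := integral_mul_fderiv_eq_neg_fderiv_mul_of_integrable (μ := volume)
    (f := f) (g := fun _ => (1:ℝ)) (v := ((0:ℝ),(1:ℝ)))
    ?_ ?_ ?_ (fun y _ => (hf.differentiable (by simp)).differentiableAt) (fun y _ => differentiableAt_const _)
  · simp only [fderiv_fun_const, Pi.zero_apply, ContinuousLinearMap.zero_apply, mul_zero,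
      mul_one, integral_zero] at h
    have : ∫ x : ℝ × ℝ, fderiv ℝ f x ((0:ℝ),(1:ℝ)) = 0 := by linarith [h]
    simpa [pd2] using this
  · simp only [mul_one]
    exact ((contDiff_pd2 hf).continuous).integrable_of_hasCompactSupport (hcs_pd2 hsupp)
  · simp [fderiv_fun_const]
  · simp only [mul_one]
    exact (hf.continuous).integrable_of_hasCompactSupport hsupp

end helpers

section main
variable (u : ℝ × ℝ → ℝ × ℝ)

/-- the vorticity ω = ∂₁u² - ∂₂u¹. -/
noncomputable def ww : ℝ × ℝ → ℝ :=
  fun y => pd1 (fun z => (u z).2) y - pd2 (fun z => (u z).1) y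
/-- ∂₁|u|². -/
noncomputable def ss1 : ℝ × ℝ → ℝ :=
  fun y => 2 * ((u y).1 * pd1 (fun z => (u z).1) y + (u y).2 * pd1 (fun z => (u z).2) y)
/-- ∂₂|u|². -/
noncomputable def ss2 : ℝ × ℝ → ℝ :=
  fun y => 2 * ((u y).1 * pd2 (fun z => (u z).1) y + (u y).2 * pd2 (fun z => (u z).2) y)
/-- the flux whose divergence is twice the integrand, first component. -/
noncomputable def FF1 : ℝ × ℝ → ℝ :=
  fun y => ww u y * ss2 u y + (u y).1 * (ww u y * ww u y)
/-- the flux whose divergence is twice the integrand, second component. -/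
noncomputable def FF2 : ℝ × ℝ → ℝ :=
  fun y => -(ww u y * ss1 u y) + (u y).2 * (ww u y * ww u y)

variable {u}

lemma key (hu : ContDiff ℝ (⊤ : ℕ∞) u) (hdiv : ∀ x, divg u x = 0) (x : ℝ × ℝ) :
    pd1 (FF1 u) x + pd2 (FF2 u) x = 2 * dot (convect u u x) (lap u x) := by
  unfold dot convect lap
  have cu1 : ContDiff ℝ (⊤ : ℕ∞) (fun y => (u y).1) := contDiff_fst.comp hu
  have cu2 : ContDiff ℝ (⊤ : ℕ∞) (fun y => (u y).2) := contDiff_snd.comp hu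
  have cp1 := contDiff_pd1 cu1
  have cp2 := contDiff_pd2 cu1
  have cq1 := contDiff_pd1 cu2
  have cq2 := contDiff_pd2 cu2
  have cw : ContDiff ℝ (⊤ : ℕ∞) (ww u) := cq1.sub cp2
  have cs1 : ContDiff ℝ (⊤ : ℕ∞) (ss1 u) := contDiff_const.mul ((cu1.mul cp1).add (cu2.mul cq1))
  have cs2 : ContDiff ℝ (⊤ : ℕ∞) (ss2 u) := contDiff_const.mul ((cu1.mul cp2).add (cu2.mul cq2))
  have D : ∀ (f : ℝ × ℝ → ℝ), ContDiff ℝ (⊤ : ℕ∞) f → DifferentiableAt ℝ f x :=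
    fun f hf => (hf.differentiable (by simp)).differentiableAt
  have dU1 := D _ cu1
  have dU2 := D _ cu2
  have dp1 := D _ cp1
  have dp2 := D _ cp2
  have dq1 := D _ cq1
  have dq2 := D _ cq2
  have dW := D _ cw
  have dS1 := D _ cs1
  have dS2 := D _ cs2
  have dWW := D _ (cw.mul cw)
  have dA := D _ (cw.mul cs2)
  have dA' := D _ (cw.mul cs1)
  have dnA' := D _ ((cw.mul cs1).neg)
  have dB := D _ (cu1.mul (cw.mul cw))
  have dB' := D _ (cu2.mul (cw.mul cw))
  have dinner1 := D _ ((cu1.mul cp1).add (cu2.mul cq1))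
  have dinner2 := D _ ((cu1.mul cp2).add (cu2.mul cq2))
  have du1p1 := D _ (cu1.mul cp1)
  have du2q1 := D _ (cu2.mul cq1)
  have du1p2 := D _ (cu1.mul cp2)
  have du2q2 := D _ (cu2.mul cq2)
  -- consequences of divergence-freeness
  have hdiv' : ∀ y, pd1 (fun z => (u z).1) y = -pd2 (fun z => (u z).2) y := by
    intro y
    have := hdiv y
    simp only [divg] at this
    linarith
  have hfun : pd1 (fun z => (u z).1) = fun y => -pd2 (fun z => (u z).2) y := funext hdiv'
  have hA : pd2 (fun y => (u y).2) x = -pd1 (fun y => (u y).1) x := by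
    have := hdiv x; simp only [divg] at this; linarith
  have hE : pd1 (pd1 fun y => (u y).1) x = -pd2 (pd1 fun y => (u y).2) x := by
    rw [hfun, pd1_neg, pd1_pd2_comm cu2 x]
  have hC : pd2 (pd1 fun y => (u y).1) x = -pd2 (pd2 fun y => (u y).2) x := by
    rw [hfun, pd2_neg]
  have hB : pd1 (pd2 fun y => (u y).1) x = -pd2 (pd2 fun y => (u y).2) x := by
    rw [pd1_pd2_comm cu1 x, hC]
  have hD : pd1 (pd2 fun y => (u y).2) x = pd2 (pd1 fun y => (u y).2) x :=
    pd1_pd2_comm cu2 x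
  unfold FF1 FF2
  unfold ww ss1 ss2 at *
  simp (disch := assumption) only [pd1_add, pd1_mul, pd1_sub, pd1_const_mul, pd1_neg,
    pd2_add, pd2_mul, pd2_sub, pd2_const_mul, pd2_neg]
  simp only [hA, hB, hC, hD, hE]
  ring

end main

theorem convective_orthogonal_to_laplacian (u : ℝ × ℝ → ℝ × ℝ)
    (hu : ContDiff ℝ (⊤ : ℕ∞) u) (hsupp : HasCompactSupport u)
    (hdiv : ∀ x, divg u x = 0) :
    ∫ x : ℝ × ℝ, dot (convect u u x) (lap u x) = 0 := by
  have cu1 : ContDiff ℝ (⊤ : ℕ∞) (fun y => (u y).1) := contDiff_fst.comp hu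
  have cu2 : ContDiff ℝ (⊤ : ℕ∞) (fun y => (u y).2) := contDiff_snd.comp hu
  have cp1 := contDiff_pd1 cu1
  have cp2 := contDiff_pd2 cu1
  have cq1 := contDiff_pd1 cu2
  have cq2 := contDiff_pd2 cu2
  have cw : ContDiff ℝ (⊤ : ℕ∞) (ww u) := cq1.sub cp2
  have cs1 : ContDiff ℝ (⊤ : ℕ∞) (ss1 u) := contDiff_const.mul ((cu1.mul cp1).add (cu2.mul cq1))
  have cs2 : ContDiff ℝ (⊤ : ℕ∞) (ss2 u) := contDiff_const.mul ((cu1.mul cp2).add (cu2.mul cq2))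
  have cF1 : ContDiff ℝ (⊤ : ℕ∞) (FF1 u) := (cw.mul cs2).add (cu1.mul (cw.mul cw))
  have cF2 : ContDiff ℝ (⊤ : ℕ∞) (FF2 u) := ((cw.mul cs1).neg).add (cu2.mul (cw.mul cw))
  have hc1 : HasCompactSupport (fun y => (u y).1) :=
    hsupp.comp_left (g := Prod.fst) rfl
  have hc2 : HasCompactSupport (fun y => (u y).2) :=
    hsupp.comp_left (g := Prod.snd) rfl
  have hcw : HasCompactSupport (ww u) :=
    (hcs_pd1 hc2).comp₂_left (hcs_pd2 hc1) (sub_zero 0)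
  have hcF1 : HasCompactSupport (FF1 u) := (hcw.mul_right).add (hc1.mul_right)
  have hcF2 : HasCompactSupport (FF2 u) :=
    ((hcw.mul_right).comp_left (g := Neg.neg) neg_zero).add (hc2.mul_right)
  have hint1 : Integrable (pd1 (FF1 u)) :=
    ((contDiff_pd1 cF1).continuous).integrable_of_hasCompactSupport (hcs_pd1 hcF1)
  have hint2 : Integrable (pd2 (FF2 u)) :=
    ((contDiff_pd2 cF2).continuous).integrable_of_hasCompactSupport (hcs_pd2 hcF2)
  have hsum : ∫ x : ℝ × ℝ, (pd1 (FF1 u) x + pd2 (FF2 u) x) = 0 := by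
    rw [integral_add hint1 hint2, integral_pd1_eq_zero cF1 hcF1,
      integral_pd2_eq_zero cF2 hcF2, add_zero]
  have h2 : ∫ x : ℝ × ℝ, 2 * dot (convect u u x) (lap u x) = 0 := by
    rw [show (fun x : ℝ × ℝ => 2 * dot (convect u u x) (lap u x)) =
      fun x => pd1 (FF1 u) x + pd2 (FF2 u) x from funext fun x => (key hu hdiv x).symm]
    exact hsum
  rw [integral_const_mul] at h2
  linarith
end

section
/- Let u : ℝ² → ℝ² be twice continuously differentiable with div u = 0 everywhere, and let φ : ℝ² → ℝ be twice continuously differentiable with compact support. Then ∫_{ℝ²} ⟨((u·∇)u)(x), curl φ(x)⟩ dx = ∫_{ℝ²} (u·∇ω)(x) · φ(x) dx, where ω = curl u. (This identity shows that testing the momentum equation with curl φ produces the transport term u·∇ω of the vorticity equation.) -/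
/-! Write `A = (u·∇)u`. Integrating by parts once in each coordinate moves the curl from `φ`
onto `A`: `∫ ⟨A, curl φ⟩ = ∫ (curl A) φ`. Expanding `curl A` by the product rule and using the
symmetry of second derivatives gives `curl ((u·∇)u) = u·∇ω + (div u) ω`, and the last term
vanishes because `u` is divergence free. -/

open MeasureTheory

/-- scalar curl of a vector field: curl v = ∂₁v² − ∂₂v¹. -/
noncomputable def scurl (u : ℝ × ℝ → ℝ × ℝ) (x : ℝ × ℝ) : ℝ :=
  pd1 (fun y => (u y).2) x - pd2 (fun y => (u y).1) x

/-- vector curl of a scalar function: curl φ = (∂₂φ, −∂₁φ). -/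
noncomputable def vcurl (φ : ℝ × ℝ → ℝ) (x : ℝ × ℝ) : ℝ × ℝ := (pd2 φ x, -(pd1 φ x))

section DirectionalDerivative

variable {E F : Type*} [NormedAddCommGroup E] [NormedSpace ℝ E]
  [NormedAddCommGroup F] [NormedSpace ℝ F]

theorem ContDiff.fderiv_apply_const {n : WithTop ℕ∞} {f : E → F} (hf : ContDiff ℝ (n + 1) f)
    (v : E) : ContDiff ℝ n fun x => fderiv ℝ f x v :=
  (hf.fderiv_right le_rfl).clm_apply contDiff_const

theorem fderiv_fderiv_apply_comm {f : E → F} (hf : ContDiff ℝ 2 f) (x v w : E) :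
    fderiv ℝ (fun y => fderiv ℝ f y w) x v = fderiv ℝ (fun y => fderiv ℝ f y v) x w := by
  have hf' : Differentiable ℝ (fderiv ℝ f) :=
    (hf.fderiv_right (m := 1) le_rfl).differentiable one_ne_zero
  rw [fderiv_clm_apply (hf' x) (differentiableAt_const w),
    fderiv_clm_apply (hf' x) (differentiableAt_const v)]
  simpa using hf.contDiffAt.isSymmSndFDerivAt (by simp) v w

theorem integral_mul_fderiv_eq_neg_fderiv_mul_of_hasCompactSupport [FiniteDimensional ℝ E]
    [MeasurableSpace E] [BorelSpace E] {μ : Measure E} [μ.IsAddHaarMeasure] {f g : E → ℝ}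
    (hf : ContDiff ℝ 1 f) (hg : ContDiff ℝ 1 g) (hgs : HasCompactSupport g) (v : E) :
    ∫ x, f x * fderiv ℝ g x v ∂μ = -∫ x, fderiv ℝ f x v * g x ∂μ := by
  have hf' : Continuous fun x => fderiv ℝ f x v :=
    (hf.continuous_fderiv one_ne_zero).clm_apply continuous_const
  have hg' : Continuous fun x => fderiv ℝ g x v :=
    (hg.continuous_fderiv one_ne_zero).clm_apply continuous_const
  exact integral_mul_fderiv_eq_neg_fderiv_mul_of_integrable
    ((hf'.mul hg.continuous).integrable_of_hasCompactSupport hgs.mul_left)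
    ((hf.continuous.mul hg').integrable_of_hasCompactSupport (hgs.fderiv_apply ℝ v).mul_left)
    ((hf.continuous.mul hg.continuous).integrable_of_hasCompactSupport hgs.mul_left)
    (fun x _ => hf.differentiable one_ne_zero x) (fun x _ => hg.differentiable one_ne_zero x)

end DirectionalDerivative

theorem integral_dot_vcurl {F : ℝ × ℝ → ℝ × ℝ} {φ : ℝ × ℝ → ℝ} (hF : ContDiff ℝ 1 F)
    (hφ : ContDiff ℝ 1 φ) (hφs : HasCompactSupport φ) :
    ∫ x, dot (F x) (vcurl φ x) = ∫ x, scurl F x * φ x := by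
  have hF₁ : ContDiff ℝ 1 fun x => (F x).1 := contDiff_fst.comp hF
  have hF₂ : ContDiff ℝ 1 fun x => (F x).2 := contDiff_snd.comp hF
  have hcont {f : ℝ × ℝ → ℝ} (hf : ContDiff ℝ 1 f) (v : ℝ × ℝ) :
      Continuous fun x => fderiv ℝ f x v :=
    (hf.continuous_fderiv one_ne_zero).clm_apply continuous_const
  have hint {f g : ℝ × ℝ → ℝ} (hf : Continuous f) (hg : Continuous g) (hgs : HasCompactSupport g) :
      Integrable fun x => f x * g x :=
    (hf.mul hg).integrable_of_hasCompactSupport hgs.mul_left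
  have hint₁ {f : ℝ × ℝ → ℝ} (hf : ContDiff ℝ 1 f) (v : ℝ × ℝ) :
      Integrable fun x => f x * fderiv ℝ φ x v :=
    hint hf.continuous (hcont hφ v) (hφs.fderiv_apply ℝ v)
  have hint₂ {f : ℝ × ℝ → ℝ} (hf : ContDiff ℝ 1 f) (v : ℝ × ℝ) :
      Integrable fun x => fderiv ℝ f x v * φ x :=
    hint (hcont hf v) hφ.continuous hφs
  calc ∫ x, dot (F x) (vcurl φ x)
      = ∫ x, (F x).1 * pd2 φ x - (F x).2 * pd1 φ x := by
        simp only [dot, vcurl, mul_neg, sub_eq_add_neg]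
    _ = ∫ x, pd1 (fun y => (F y).2) x * φ x - pd2 (fun y => (F y).1) x * φ x := by
        simp only [pd1, pd2]
        rw [integral_sub (hint₁ hF₁ _) (hint₁ hF₂ _), integral_sub (hint₂ hF₂ _) (hint₂ hF₁ _),
          integral_mul_fderiv_eq_neg_fderiv_mul_of_hasCompactSupport hF₁ hφ hφs,
          integral_mul_fderiv_eq_neg_fderiv_mul_of_hasCompactSupport hF₂ hφ hφs, neg_sub_neg]
    _ = ∫ x, scurl F x * φ x := by simp only [scurl, sub_mul]

theorem ContDiff.convect {n : WithTop ℕ∞} {u v : ℝ × ℝ → ℝ × ℝ} (hu : ContDiff ℝ n u)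
    (hv : ContDiff ℝ (n + 1) v) : ContDiff ℝ n (convect u v) := by
  have hv₁ : ContDiff ℝ n fun x => fderiv ℝ (fun y => (v y).1) x :=
    (contDiff_fst.comp hv).fderiv_right le_rfl
  have hv₂ : ContDiff ℝ n fun x => fderiv ℝ (fun y => (v y).2) x :=
    (contDiff_snd.comp hv).fderiv_right le_rfl
  unfold _root_.convect pd1 pd2
  fun_prop

theorem scurl_convect_self {u : ℝ × ℝ → ℝ × ℝ} (hu : ContDiff ℝ 2 u) (x : ℝ × ℝ) :
    scurl (convect u u) x =
      (u x).1 * pd1 (scurl u) x + (u x).2 * pd2 (scurl u) x + divg u x * scurl u x := by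
  have ha : ContDiff ℝ 2 fun y => (u y).1 := contDiff_fst.comp hu
  have hb : ContDiff ℝ 2 fun y => (u y).2 := contDiff_snd.comp hu
  have du : Differentiable ℝ u := hu.differentiable two_ne_zero
  have da₁ := (ha.fderiv_apply_const (n := 1) (1, 0)).differentiable one_ne_zero
  have da₂ := (ha.fderiv_apply_const (n := 1) (0, 1)).differentiable one_ne_zero
  have db₁ := (hb.fderiv_apply_const (n := 1) (1, 0)).differentiable one_ne_zero
  have db₂ := (hb.fderiv_apply_const (n := 1) (0, 1)).differentiable one_ne_zero
  unfold scurl convect divg pd1 pd2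
  simp (disch := fun_prop) only [fderiv_fun_mul, fderiv_fun_add, fderiv_fun_sub, add_apply,
    sub_apply, smul_apply, smul_eq_mul]
  rw [fderiv_fderiv_apply_comm ha x (0, 1) (1, 0), fderiv_fderiv_apply_comm hb x (0, 1) (1, 0)]
  ring

theorem convective_term_tested_with_curl (u : ℝ × ℝ → ℝ × ℝ) (φ : ℝ × ℝ → ℝ)
    (hu : ContDiff ℝ 2 u) (hdiv : ∀ x, divg u x = 0)
    (hφ : ContDiff ℝ 2 φ) (hφs : HasCompactSupport φ) :
    ∫ x : ℝ × ℝ, dot (convect u u x) (vcurl φ x) =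
      ∫ x : ℝ × ℝ, ((u x).1 * pd1 (scurl u) x + (u x).2 * pd2 (scurl u) x) * φ x := by
  rw [integral_dot_vcurl ((hu.of_le one_le_two).convect hu) (hφ.of_le one_le_two) hφs]
  congr 1 with x
  rw [scurl_convect_self hu, hdiv, zero_mul, add_zero]
end

section
/- Let r ∈ ℝ. Let u : ℝ × ℝ² → ℝ² be continuously differentiable with div_x u(t,·) = 0 for every t, let p : ℝ × ℝ² → ℝ be continuously differentiable, let g : ℝ² → ℝ² be continuous, suppose there is a compact set K ⊂ ℝ² with supp u(t,·) ⊆ K for all t, and suppose ∂ₜu + (u·∇)u + ∇_x p + r u = g holds pointwise on ℝ × ℝ². Then the energy E(t) = ∫_{ℝ²} |u(t,x)|² dx is differentiable in t and satisfies the balance equation (1/2) E′(t) + r E(t) = ∫_{ℝ²} ⟨g(x), u(t,x)⟩ dx for every t. -/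
/-!
Differentiating under the integral sign, which is legitimate because every `u(t, ·)` is supported
in the same compact set, gives `½ E′(t) = ∫ ⟨∂ₜu, u⟩`. Pairing the momentum equation with `u`
and using `div u = 0`, the convective and pressure terms combine into the divergence of the
Bernoulli flux `(p + |u|²/2) u`; this field has compact support, so its divergence integrates to
zero, and what remains is `∫ ⟨g, u⟩ = ½ E′ + r E`.
-/

open MeasureTheory

noncomputable def grad (f : ℝ × ℝ → ℝ) (x : ℝ × ℝ) : ℝ × ℝ := (pd1 f x, pd2 f x)

/-- The convective term `(v·∇)v`. -/
noncomputable def convectiveTerm (v : ℝ × ℝ → ℝ × ℝ) (x : ℝ × ℝ) : ℝ × ℝ :=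
  ((v x).1 * pd1 (fun y => (v y).1) x + (v x).2 * pd2 (fun y => (v y).1) x,
    (v x).1 * pd1 (fun y => (v y).2) x + (v x).2 * pd2 (fun y => (v y).2) x)

noncomputable def bernoulliFlux (q : ℝ × ℝ → ℝ) (v : ℝ × ℝ → ℝ × ℝ) (x : ℝ × ℝ) : ℝ × ℝ :=
  (q x + dot (v x) (v x) / 2) • v x

theorem ContDiff.bernoulliFlux {q : ℝ × ℝ → ℝ} {v : ℝ × ℝ → ℝ × ℝ} (hq : ContDiff ℝ 1 q)
    (hv : ContDiff ℝ 1 v) : ContDiff ℝ 1 (bernoulliFlux q v) :=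
  (hq.add (((hv.fst.mul hv.fst).add (hv.snd.mul hv.snd)).div_const 2)).smul hv

theorem HasCompactSupport.bernoulliFlux {v : ℝ × ℝ → ℝ × ℝ} (hv : HasCompactSupport v)
    (q : ℝ × ℝ → ℝ) : HasCompactSupport (bernoulliFlux q v) :=
  hv.smul_left (f := fun x => q x + dot (v x) (v x) / 2)

section IntegralFDeriv

variable {E : Type*} [NormedAddCommGroup E] [NormedSpace ℝ E] [MeasurableSpace E] [BorelSpace E]
  {μ : Measure E}

theorem ContDiff.integrable_fderiv_apply [IsFiniteMeasureOnCompacts μ] {f : E → ℝ}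
    (hf : ContDiff ℝ 1 f) (hfc : HasCompactSupport f) (v : E) :
    Integrable (fun x => fderiv ℝ f x v) μ :=
  ((hf.continuous_fderiv one_ne_zero).clm_apply continuous_const).integrable_of_hasCompactSupport
    (hfc.fderiv_apply (𝕜 := ℝ) v)

theorem integral_fderiv_apply_eq_zero [FiniteDimensional ℝ E] [μ.IsAddHaarMeasure] {f : E → ℝ}
    (hf : ContDiff ℝ 1 f) (hfc : HasCompactSupport f) (v : E) : ∫ x, fderiv ℝ f x v ∂μ = 0 := by
  have h := integral_mul_fderiv_eq_neg_fderiv_mul_of_integrable (μ := μ) (v := v)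
    (f := fun _ => (1 : ℝ)) (g := f) (by simp) (by simpa using hf.integrable_fderiv_apply hfc v)
    (by simpa using hf.continuous.integrable_of_hasCompactSupport hfc)
    (fun x _ => differentiableAt_const 1) (fun x _ => hf.differentiable one_ne_zero x)
  simpa using h

end IntegralFDeriv

section Divergence

variable {v : ℝ × ℝ → ℝ × ℝ}

theorem integrable_divg (hv : ContDiff ℝ 1 v) (hvc : HasCompactSupport v) :
    Integrable (divg v) :=
  hv.fst.integrable_fderiv_apply (hvc.comp_left (g := Prod.fst) rfl) _ |>.add
    (hv.snd.integrable_fderiv_apply (hvc.comp_left (g := Prod.snd) rfl) _)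

theorem integral_divg_eq_zero (hv : ContDiff ℝ 1 v) (hvc : HasCompactSupport v) :
    ∫ x, divg v x = 0 := by
  have hvc₁ : HasCompactSupport fun y => (v y).1 := hvc.comp_left (g := Prod.fst) rfl
  have hvc₂ : HasCompactSupport fun y => (v y).2 := hvc.comp_left (g := Prod.snd) rfl
  unfold divg pd1 pd2
  rw [integral_add (hv.fst.integrable_fderiv_apply hvc₁ _) (hv.snd.integrable_fderiv_apply hvc₂ _),
    integral_fderiv_apply_eq_zero hv.fst hvc₁, integral_fderiv_apply_eq_zero hv.snd hvc₂, add_zero]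

variable {x : ℝ × ℝ}

theorem divg_smul {φ : ℝ × ℝ → ℝ} (hφ : DifferentiableAt ℝ φ x) (hv : DifferentiableAt ℝ v x) :
    divg (fun y => φ y • v y) x = φ x * divg v x + dot (grad φ x) (v x) := by
  simp only [divg, pd1, pd2, grad, dot, Prod.smul_fst, Prod.smul_snd, smul_eq_mul]
  rw [fderiv_fun_mul hφ hv.fst, fderiv_fun_mul hφ hv.snd]
  simp only [FunLike.coe_add, FunLike.coe_smul, Pi.add_apply, Pi.smul_apply, smul_eq_mul]
  ring

theorem grad_add {f h : ℝ × ℝ → ℝ} (hf : DifferentiableAt ℝ f x) (hh : DifferentiableAt ℝ h x) :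
    grad (fun y => f y + h y) x = grad f x + grad h x := by
  simp [grad, pd1, pd2, fderiv_fun_add hf hh]

theorem grad_half_dot_self (hv : DifferentiableAt ℝ v x) :
    grad (fun y => dot (v y) (v y) / 2) x =
      ((v x).1 * pd1 (fun y => (v y).1) x + (v x).2 * pd1 (fun y => (v y).2) x,
        (v x).1 * pd2 (fun y => (v y).1) x + (v x).2 * pd2 (fun y => (v y).2) x) := by
  have h₁ := hv.fst.hasFDerivAt
  have h₂ := hv.snd.hasFDerivAt
  have hhalf : (fun y => dot (v y) (v y) / 2) =
      fun y => ((v y).1 * (v y).1 + (v y).2 * (v y).2) * (1 / 2) := by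
    funext y; simp only [dot]; ring
  simp only [grad, pd1, pd2, hhalf,
    (((h₁.fun_mul h₁).fun_add (h₂.fun_mul h₂)).mul_const (1 / 2 : ℝ)).fderiv]
  simp only [FunLike.coe_add, FunLike.coe_smul, Pi.add_apply, Pi.smul_apply, smul_eq_mul]
  ext <;> ring

theorem divg_bernoulliFlux {q : ℝ × ℝ → ℝ} (hq : DifferentiableAt ℝ q x)
    (hv : DifferentiableAt ℝ v x) (hdiv : divg v x = 0) :
    divg (bernoulliFlux q v) x =
      dot (convectiveTerm v x + grad q x) (v x) := by
  have hkin : DifferentiableAt ℝ (fun y => dot (v y) (v y) / 2) x := by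
    unfold dot; fun_prop
  unfold bernoulliFlux
  rw [divg_smul (hq.fun_add hkin) hv, hdiv, grad_add hq hkin, grad_half_dot_self hv]
  simp only [dot, convectiveTerm, Prod.fst_add, Prod.snd_add]
  ring

end Divergence

section TimeDerivative

variable {E : Type*} [NormedAddCommGroup E] [NormedSpace ℝ E]

theorem DifferentiableAt.hasDerivAt_fst_slice {F : Type*} [NormedAddCommGroup F] [NormedSpace ℝ F]
    {f : ℝ × E → F} {s : ℝ} {x : E} (hf : DifferentiableAt ℝ f (s, x)) :
    HasDerivAt (fun s' => f (s', x)) (fderiv ℝ f (s, x) (1, 0)) s :=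
  hf.hasFDerivAt.comp_hasDerivAt s ((hasDerivAt_id s).prodMk (hasDerivAt_const s x))

variable [MeasurableSpace E] [OpensMeasurableSpace E] {μ : Measure E} [IsFiniteMeasureOnCompacts μ]

theorem hasDerivAt_integral_of_contDiff_of_support_subset {F : ℝ × E → ℝ} (hF : ContDiff ℝ 1 F)
    {K : Set E} (hK : IsCompact K) (hFK : ∀ s, Function.support (fun x => F (s, x)) ⊆ K) (t : ℝ) :
    Integrable (fun x => deriv (fun s => F (s, x)) t) μ ∧
      HasDerivAt (fun s => ∫ x, F (s, x) ∂μ) (∫ x, deriv (fun s => F (s, x)) t ∂μ) t := by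
  set F' : ℝ × E → ℝ := fun q => fderiv ℝ F q (1, 0)
  have hF'c : Continuous F' := (hF.continuous_fderiv one_ne_zero).clm_apply continuous_const
  have hderiv : ∀ s x, HasDerivAt (fun s' => F (s', x)) (F' (s, x)) s := fun s x =>
    (hF.differentiable one_ne_zero _).hasDerivAt_fst_slice
  have hF'K : ∀ s, ∀ x ∉ K, F' (s, x) = 0 := by
    intro s x hx
    have hzero : (fun s' => F (s', x)) = fun _ => 0 :=
      funext fun s' => Function.notMem_support.mp fun h => hx (hFK s' h)
    exact (hderiv s x).unique (by rw [hzero]; exact hasDerivAt_const s 0)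
  obtain ⟨M, hM⟩ := ((isCompact_Icc (a := t - 1) (b := t + 1)).prod hK).exists_bound_of_continuousOn
    hF'c.continuousOn
  have hslice : ∀ s, Continuous fun x => F (s, x) := fun s =>
    hF.continuous.comp (continuous_const.prodMk continuous_id)
  have hbound : ∀ x, ∀ s ∈ Set.Icc (t - 1) (t + 1), ‖F' (s, x)‖ ≤ K.indicator (fun _ => M) x := by
    intro x s hs
    by_cases hx : x ∈ K
    · simpa [hx] using hM (s, x) ⟨hs, hx⟩
    · simp [hx, hF'K s x hx]
  have h := hasDerivAt_integral_of_dominated_loc_of_deriv_le (μ := μ) (x₀ := t)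
    (F := fun s x => F (s, x)) (F' := fun s x => F' (s, x))
    (Icc_mem_nhds (by linarith) (by linarith))
    (Filter.Eventually.of_forall fun s => (hslice s).aestronglyMeasurable)
    ((hslice t).integrable_of_hasCompactSupport (.of_support_subset_isCompact hK (hFK t)))
    (hF'c.comp (continuous_const.prodMk continuous_id)).aestronglyMeasurable
    (ae_of_all _ hbound)
    ((integrableOn_const hK.measure_ne_top).integrable_indicator hK.measurableSet)
    (ae_of_all _ fun x s _ => hderiv s x)
  simpa only [(hderiv t _).deriv] using h

end TimeDerivative

theorem deriv_sq_add_sq {a b : ℝ → ℝ} {t : ℝ} (ha : DifferentiableAt ℝ a t)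
    (hb : DifferentiableAt ℝ b t) :
    deriv (fun s => a s ^ 2 + b s ^ 2) t = 2 * (a t * deriv a t + b t * deriv b t) := by
  rw [((ha.hasDerivAt.fun_pow 2).fun_add (hb.hasDerivAt.fun_pow 2)).deriv]
  ring

theorem energy_balance_general (r : ℝ) (u : ℝ × (ℝ × ℝ) → ℝ × ℝ) (p : ℝ × (ℝ × ℝ) → ℝ)
    (g : ℝ × ℝ → ℝ × ℝ)
    (hu : ContDiff ℝ 1 u) (hp : ContDiff ℝ 1 p)
    (hdiv : ∀ t : ℝ, ∀ x : ℝ × ℝ, divg (fun y => u (t, y)) x = 0)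
    (hsupp : ∃ K : Set (ℝ × ℝ), IsCompact K ∧
      ∀ t : ℝ, Function.support (fun x => u (t, x)) ⊆ K)
    (heq : ∀ t : ℝ, ∀ x : ℝ × ℝ,
      (deriv (fun s => (u (s, x)).1) t
          + ((u (t, x)).1 * pd1 (fun y => (u (t, y)).1) x
              + (u (t, x)).2 * pd2 (fun y => (u (t, y)).1) x)
          + pd1 (fun y => p (t, y)) x + r * (u (t, x)).1,
       deriv (fun s => (u (s, x)).2) t
          + ((u (t, x)).1 * pd1 (fun y => (u (t, y)).2) x
              + (u (t, x)).2 * pd2 (fun y => (u (t, y)).2) x)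
          + pd2 (fun y => p (t, y)) x + r * (u (t, x)).2) = g x) :
    ∀ t : ℝ,
      DifferentiableAt ℝ (fun s => ∫ x : ℝ × ℝ, ((u (s, x)).1 ^ 2 + (u (s, x)).2 ^ 2)) t ∧
      (1 / 2) * deriv (fun s => ∫ x : ℝ × ℝ, ((u (s, x)).1 ^ 2 + (u (s, x)).2 ^ 2)) t
          + r * ∫ x : ℝ × ℝ, ((u (t, x)).1 ^ 2 + (u (t, x)).2 ^ 2)
        = ∫ x : ℝ × ℝ, dot (g x) (u (t, x)) := by
  obtain ⟨K, hK, hsuppK⟩ := hsupp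
  intro t
  have hsupp_sq : ∀ s, Function.support (fun x => (u (s, x)).1 ^ 2 + (u (s, x)).2 ^ 2) ⊆ K :=
    fun s => Function.support_subset_iff'.2 fun x hx => by
      simp [Function.notMem_support.mp fun h => hx (hsuppK s h)]
  have hsq : ContDiff ℝ 1 fun q => (u q).1 ^ 2 + (u q).2 ^ 2 := (hu.fst.pow 2).add (hu.snd.pow 2)
  obtain ⟨hint, hE⟩ := hasDerivAt_integral_of_contDiff_of_support_subset (μ := volume) hsq hK
    hsupp_sq t
  refine ⟨hE.differentiableAt, ?_⟩
  have hut : ContDiff ℝ 1 fun y => u (t, y) := hu.comp (contDiff_const.prodMk contDiff_id)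
  have hpt : ContDiff ℝ 1 fun y => p (t, y) := hp.comp (contDiff_const.prodMk contDiff_id)
  set Φ := bernoulliFlux (fun y => p (t, y)) fun y => u (t, y)
  have hΦ : ContDiff ℝ 1 Φ := hpt.bernoulliFlux hut
  have hΦc : HasCompactSupport Φ :=
    (HasCompactSupport.of_support_subset_isCompact hK (hsuppK t)).bernoulliFlux _
  have hpoint : ∀ x, dot (g x) (u (t, x)) =
      1 / 2 * deriv (fun s => (u (s, x)).1 ^ 2 + (u (s, x)).2 ^ 2) t + divg Φ x
        + r * ((u (t, x)).1 ^ 2 + (u (t, x)).2 ^ 2) := by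
    intro x
    have hux : DifferentiableAt ℝ (fun s => u (s, x)) t :=
      ((hu.differentiable one_ne_zero _).hasDerivAt_fst_slice).differentiableAt
    rw [← heq t x, divg_bernoulliFlux (hpt.differentiable one_ne_zero x)
      (hut.differentiable one_ne_zero x) (hdiv t x), deriv_sq_add_sq hux.fst hux.snd]
    simp only [dot, convectiveTerm, grad, Prod.fst_add, Prod.snd_add]
    ring
  have hint_sq : Integrable fun x => (u (t, x)).1 ^ 2 + (u (t, x)).2 ^ 2 :=
    (hsq.continuous.comp (continuous_const.prodMk continuous_id)).integrable_of_hasCompactSupport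
      (.of_support_subset_isCompact hK (hsupp_sq t))
  have hint_lhs : Integrable fun x =>
      1 / 2 * deriv (fun s => (u (s, x)).1 ^ 2 + (u (s, x)).2 ^ 2) t + divg Φ x :=
    (hint.const_mul _).add (integrable_divg hΦ hΦc)
  rw [hE.deriv, integral_congr_ae (ae_of_all _ hpoint), integral_add hint_lhs (hint_sq.const_mul r),
    integral_add (hint.const_mul _) (integrable_divg hΦ hΦc), integral_divg_eq_zero hΦ hΦc,
    integral_const_mul, integral_const_mul, add_zero]

theorem energy_balance (r : ℝ) (u : ℝ × (ℝ × ℝ) → ℝ × ℝ) (p : ℝ × (ℝ × ℝ) → ℝ)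
    (g : ℝ × ℝ → ℝ × ℝ)
    (hu : ContDiff ℝ 1 u) (hp : ContDiff ℝ 1 p) (hg : Continuous g)
    (hdiv : ∀ t : ℝ, ∀ x : ℝ × ℝ, divg (fun y => u (t, y)) x = 0)
    (hsupp : ∃ K : Set (ℝ × ℝ), IsCompact K ∧
      ∀ t : ℝ, Function.support (fun x => u (t, x)) ⊆ K)
    (heq : ∀ t : ℝ, ∀ x : ℝ × ℝ,
      (deriv (fun s => (u (s, x)).1) t
          + ((u (t, x)).1 * pd1 (fun y => (u (t, y)).1) x
              + (u (t, x)).2 * pd2 (fun y => (u (t, y)).1) x)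
          + pd1 (fun y => p (t, y)) x + r * (u (t, x)).1,
       deriv (fun s => (u (s, x)).2) t
          + ((u (t, x)).1 * pd1 (fun y => (u (t, y)).2) x
              + (u (t, x)).2 * pd2 (fun y => (u (t, y)).2) x)
          + pd2 (fun y => p (t, y)) x + r * (u (t, x)).2) = g x) :
    ∀ t : ℝ,
      DifferentiableAt ℝ (fun s => ∫ x : ℝ × ℝ, ((u (s, x)).1 ^ 2 + (u (s, x)).2 ^ 2)) t ∧
      (1 / 2) * deriv (fun s => ∫ x : ℝ × ℝ, ((u (s, x)).1 ^ 2 + (u (s, x)).2 ^ 2)) t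
          + r * ∫ x : ℝ × ℝ, ((u (t, x)).1 ^ 2 + (u (t, x)).2 ^ 2)
        = ∫ x : ℝ × ℝ, dot (g x) (u (t, x)) :=
  energy_balance_general r u p g hu hp hdiv hsupp heq
end

section
/- Let r > 0, let h : ℝ → ℝ be continuous and bounded on (−∞, 0], and let y : ℝ → ℝ be differentiable and bounded on (−∞, 0] with (1/2) y′(t) + r y(t) = h(t) for all t ∈ ℝ. Then the function t ↦ e^{2rt} h(t) is integrable on (−∞, 0] and y(0) = 2 ∫_{−∞}^{0} e^{2rt} h(t) dt. (This representation of the value of a complete bounded trajectory in terms of its history is the key identity in the proofs of asymptotic compactness and of the upper semicontinuity of the attractors.) -/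
open MeasureTheory Filter Set Real Topology

section ExpWeight

variable {c a M : ℝ}

lemma integrableOn_exp_mul_mul_Iic {g : ℝ → ℝ} (hc : 0 < c)
    (hg : AEStronglyMeasurable g (volume.restrict (Iic a))) (hgb : ∀ t ≤ a, |g t| ≤ M) :
    IntegrableOn (fun t => exp (c * t) * g t) (Iic a) :=
  (integrableOn_exp_mul_Iic hc a).mul_bdd hg <|
    ae_restrict_of_forall_mem measurableSet_Iic fun t ht => (norm_eq_abs (g t)).trans_le (hgb t ht)

lemma tendsto_exp_mul_mul_atBot {y : ℝ → ℝ} (hc : 0 < c) (hyb : ∀ t ≤ a, |y t| ≤ M) :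
    Tendsto (fun t => exp (c * t) * y t) atBot (𝓝 0) :=
  (tendsto_exp_atBot.comp (tendsto_id.const_mul_atBot hc)).zero_mul_isBoundedUnder_le
    ⟨M, eventually_map.2 <| (eventually_le_atBot a).mono fun t ht =>
      (norm_eq_abs (y t)).trans_le (hyb t ht)⟩

lemma hasDerivAt_exp_mul_mul {y : ℝ → ℝ} {y' x : ℝ} (hy : HasDerivAt y y' x) :
    HasDerivAt (fun t => exp (c * t) * y t) (exp (c * x) * (y' + c * y x)) x := by
  have hexp : HasDerivAt (fun t => exp (c * t)) (exp (c * x) * c) x :=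
    ((hasDerivAt_id x).const_mul c).exp.congr_deriv (by simp)
  exact (hexp.mul hy).congr_deriv (by ring)

/-- Variation of constants for `y' + c y = g`: the integrating factor `exp (c t)` turns the
left-hand side into a derivative, and the boundary term at `-∞` vanishes since `y` is bounded. -/
theorem integral_Iic_exp_mul_deriv_add_mul {y y' : ℝ → ℝ} (hc : 0 < c)
    (hy : ∀ t ≤ a, HasDerivAt y (y' t) t) (hyb : ∀ t ≤ a, |y t| ≤ M)
    (hint : IntegrableOn (fun t => exp (c * t) * (y' t + c * y t)) (Iic a)) :
    ∫ t in Iic a, exp (c * t) * (y' t + c * y t) = exp (c * a) * y a := by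
  rw [integral_Iic_of_hasDerivAt_of_tendsto' (fun t ht => hasDerivAt_exp_mul_mul (hy t ht)) hint
    (tendsto_exp_mul_mul_atBot hc hyb), sub_zero]

end ExpWeight

theorem complete_trajectory_representation_general (r : ℝ) (hr : 0 < r) (h y : ℝ → ℝ)
    (hhb : ∃ M : ℝ, ∀ t ≤ (0 : ℝ), |h t| ≤ M)
    (hy : Differentiable ℝ y) (hyb : ∃ M : ℝ, ∀ t ≤ (0 : ℝ), |y t| ≤ M)
    (heq : ∀ t : ℝ, (1 / 2) * deriv y t + r * y t = h t) :
    IntegrableOn (fun t => Real.exp (2 * r * t) * h t) (Set.Iic 0) ∧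
      y 0 = 2 * ∫ t in Set.Iic (0 : ℝ), Real.exp (2 * r * t) * h t := by
  obtain ⟨M, hM⟩ := hhb
  obtain ⟨N, hN⟩ := hyb
  have hc : 0 < 2 * r := by positivity
  have hmeas : Measurable h := by
    rw [show h = fun t => (deriv y t + 2 * r * y t) / 2 from funext fun t => by linarith [heq t]]
    exact ((measurable_deriv y).add (hy.continuous.measurable.const_mul _)).div_const 2
  have hint := integrableOn_exp_mul_mul_Iic hc hmeas.aestronglyMeasurable hM
  refine ⟨hint, ?_⟩
  have hweighted : (fun t => exp (2 * r * t) * (deriv y t + 2 * r * y t)) =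
      fun t => 2 * (exp (2 * r * t) * h t) :=
    funext fun t => by rw [← heq t]; ring
  have key := integral_Iic_exp_mul_deriv_add_mul hc (fun t _ => (hy t).hasDerivAt) hN
    (hweighted ▸ hint.const_mul 2)
  rw [hweighted, integral_const_mul] at key
  simpa using key.symm

theorem complete_trajectory_representation (r : ℝ) (hr : 0 < r) (h y : ℝ → ℝ)
    (hh : Continuous h) (hhb : ∃ M : ℝ, ∀ t ≤ (0 : ℝ), |h t| ≤ M)
    (hy : Differentiable ℝ y) (hyb : ∃ M : ℝ, ∀ t ≤ (0 : ℝ), |y t| ≤ M)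
    (heq : ∀ t : ℝ, (1 / 2) * deriv y t + r * y t = h t) :
    IntegrableOn (fun t => Real.exp (2 * r * t) * h t) (Set.Iic 0) ∧
      y 0 = 2 * ∫ t in Set.Iic (0 : ℝ), Real.exp (2 * r * t) * h t :=
  complete_trajectory_representation_general r hr h y hhb hy hyb heq
end
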